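/- arXiv:2205.14653 — 3 statements merged into one kernel-verified Lean document; each statement's English description precedes it below -/
import Mathlib

section
/- Let K be an infinite field and let f ∈ K(x) be a rational function in one variable satisfying f(x + c) = f(x) + c (as rational functions) for every c ∈ K. Then f(x) = x + a for some a ∈ K. -/
open Polynomial

/-- The translation automorphism `x ↦ x + c` of `K(x)`. -/
noncomputable def transEquiv {K : Type*} [Field K] (c : K) :
    RatFunc K ≃ₐ[K] RatFunc K :=
  IsFractionRing.algEquivOfAlgEquiv (Polynomial.algEquivAevalXAddC c)

theorem transEquiv_algebraMap {K : Type*} [Field K] (c : K) (p : K[X]) :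
    transEquiv c (algebraMap K[X] (RatFunc K) p)
      = algebraMap K[X] (RatFunc K) (p.comp (X + C c)) := by
  rw [transEquiv, IsFractionRing.algEquivOfAlgEquiv_algebraMap]
  congr 1

theorem transEquiv_X {K : Type*} [Field K] (c : K) :
    transEquiv c RatFunc.X = RatFunc.X + RatFunc.C c := by
  rw [← RatFunc.algebraMap_X (K := K), transEquiv_algebraMap, X_comp, map_add,
    RatFunc.algebraMap_X, RatFunc.algebraMap_C]

/-- A rational function fixed by all translations over an infinite field is constant. -/
theorem fixed_of_trans {K : Type*} [Field K] [Infinite K] (g : RatFunc K)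
    (hg : ∀ c : K, transEquiv c g = g) : ∃ a : K, g = RatFunc.C a := by
  set P := g.num with hP
  set Q := g.denom with hQ
  have hQ0 : Q ≠ 0 := g.denom_ne_zero
  have hcop : IsCoprime P Q := g.isCoprime_num_denom
  have hQm : Q.Monic := g.monic_denom
  -- key polynomial identity from σ_c g = g
  have key : ∀ c : K, P.comp (X + C c) * Q = P * (Q.comp (X + C c)) := by
    intro c
    have h1 := hg c
    rw [← g.num_div_denom, map_div₀, transEquiv_algebraMap, transEquiv_algebraMap] at h1
    have hQc0 : (Q.comp (X + C c)) ≠ 0 := (hQm.comp_X_add_C c).ne_zero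
    rw [div_eq_div_iff (RatFunc.algebraMap_ne_zero hQc0)
      (RatFunc.algebraMap_ne_zero hQ0), ← map_mul, ← map_mul] at h1
    exact RatFunc.algebraMap_injective K h1
  -- Q is fixed by translations
  have hQfix : ∀ c : K, Q.comp (X + C c) = Q := by
    intro c
    have hdvd : Q ∣ Q.comp (X + C c) := by
      refine hcop.symm.dvd_of_dvd_mul_left
        ⟨P.comp (X + C c), by rw [← key c]; ring⟩
    refine (eq_of_dvd_of_natDegree_le_of_leadingCoeff hdvd ?_ ?_).symm
    · rw [natDegree_comp, natDegree_X_add_C, mul_one]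
    · rw [hQm.leadingCoeff, (hQm.comp_X_add_C c).leadingCoeff]
  -- hence P is fixed by translations
  have hPfix : ∀ c : K, P.comp (X + C c) = P := by
    intro c
    have := key c
    rw [hQfix c] at this
    exact mul_right_cancel₀ hQ0 this
  -- a polynomial fixed by translations over an infinite field is constant
  have hconst : ∀ (R : K[X]), (∀ c : K, R.comp (X + C c) = R) → R = C (R.eval 0) := by
    intro R hR
    refine Polynomial.funext fun r => ?_
    have := congrArg (fun p => Polynomial.eval 0 p) (hR r)
    simpa [eval_comp] using this
  have hQc : Q = 1 := by
    have := hconst Q hQfix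
    have hl := hQm.leadingCoeff
    rw [this, leadingCoeff_C] at hl
    rw [this, hl, map_one]
  refine ⟨P.eval 0, ?_⟩
  rw [← g.num_div_denom, ← hP, ← hQ, hQc, map_one, div_one, hconst P hPfix,
    RatFunc.algebraMap_C, eval_C]

/-- If a rational function `f ∈ K(x)` over an infinite field satisfies
`f(x + c) = f(x) + c` for every `c ∈ K`, then `f = x + a` for some `a ∈ K`. -/
theorem stmt10 {K : Type*} [Field K] [Infinite K] (f : RatFunc K)
    (h : ∀ c : K, ∀ σ : RatFunc K ≃ₐ[K] RatFunc K,
      σ RatFunc.X = RatFunc.X + RatFunc.C c → σ f = f + RatFunc.C c) :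
    ∃ a : K, f = RatFunc.X + RatFunc.C a := by
  have hfix : ∀ c : K, transEquiv c (f - RatFunc.X) = f - RatFunc.X := by
    intro c
    rw [map_sub, h c (transEquiv c) (transEquiv_X c), transEquiv_X c]
    ring
  obtain ⟨a, ha⟩ := fixed_of_trans (f - RatFunc.X) hfix
  exact ⟨a, by linear_combination ha⟩
end

section
/- Let K be an infinite field, and let F ∈ K(x₁,…,x_l, z₁,…,z_r) be a rational function such that for all (t₁,…,t_l) ∈ (K^×)^l one has F(t₁x₁,…,t_lx_l, z₁,…,z_r) = t_i · F(x₁,…,x_l, z₁,…,z_r) for a fixed index i. Then F = h(z₁,…,z_r)·x_i for some rational function h ∈ K(z₁,…,z_r). -/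
/-!
Write `F = a / b` with polynomials `a, b`. Scaling the `x`-variables by `t` turns the hypothesis
into `a(t • x) · b = tᵢ · a · b(t • x)`. Both sides are polynomials in `t`, and they agree on the
infinite box `(Kˣ)ˡ`, so the identity holds with `t` replaced by indeterminates `T`. Writing
`p = ∑ₑ pₑ(z) xᵉ`, the coefficient of `Tᵉ⁺ᵟ` (with `δ` the `i`-th unit vector) reads
`xᵉ⁺ᵟ aₑ₊ᵟ · b = a · xᵉ bₑ`, i.e. `bₑ · a = aₑ₊ᵟ xᵢ · b`. Choosing `e` with `bₑ ≠ 0` gives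
`F = (aₑ₊ᵟ / bₑ) · xᵢ`.
-/

open MvPolynomial

namespace MvPolynomial

variable {R ι : Type*} [CommRing R]

noncomputable def scaleVars (t : ι → R) : MvPolynomial ι R →ₐ[R] MvPolynomial ι R :=
  aeval fun j => C (t j) * X j

@[simp]
theorem scaleVars_X (t : ι → R) (j : ι) : scaleVars t (X j) = C (t j) * X j := aeval_X _ _

theorem scaleVars_mul (s t : ι → R) : scaleVars (s * t) = (scaleVars s).comp (scaleVars t) := by
  ext j : 1
  simp only [AlgHom.comp_apply, scaleVars_X, Pi.mul_apply, map_mul, algHom_C, algebraMap_eq]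
  ring

theorem scaleVars_one : scaleVars (1 : ι → R) = AlgHom.id R _ := by
  ext j : 1
  simp

noncomputable def scaleVarsEquiv (t : ι → Rˣ) : MvPolynomial ι R ≃ₐ[R] MvPolynomial ι R :=
  AlgEquiv.ofAlgHom (scaleVars fun j => t j) (scaleVars fun j => ↑(t j)⁻¹)
    (by rw [← scaleVars_mul, ← scaleVars_one]; congr; ext j; simp)
    (by rw [← scaleVars_mul, ← scaleVars_one]; congr; ext j; simp)

@[simp]
theorem scaleVarsEquiv_apply (t : ι → Rˣ) (p : MvPolynomial ι R) :
    scaleVarsEquiv t p = scaleVars (fun j => (t j : R)) p := rfl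

/-- `p(x) ↦ p(T • x)`: the outer variables play the role of the scaling factors `T`. -/
noncomputable def universalScaleVars :
    MvPolynomial ι R →ₐ[R] MvPolynomial ι (MvPolynomial ι R) :=
  aeval fun j => X j * C (X j)

theorem eval_universalScaleVars (t : ι → R) (p : MvPolynomial ι R) :
    eval (fun j => C (t j)) (universalScaleVars p) = scaleVars t p := by
  induction p using MvPolynomial.induction_on with
  | C a => simp [universalScaleVars, scaleVars, algebraMap_eq]
  | add p q hp hq => simp [hp, hq]
  | mul_X p j hp =>
    rw [map_mul, map_mul, hp]
    simp [universalScaleVars, mul_comm]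

theorem universalScaleVars_monomial (m : ι →₀ ℕ) (c : R) :
    universalScaleVars (monomial m c) = monomial m (monomial m c) := by
  rw [universalScaleVars, aeval_monomial]
  simp only [mul_pow, Finsupp.prod_mul, ← map_pow]
  rw [← map_finsuppProd, monomial_eq, monomial_eq, algebraMap_apply, algebraMap_eq, map_mul]
  ring

theorem coeff_universalScaleVars (d : ι →₀ ℕ) (p : MvPolynomial ι R) :
    coeff d (universalScaleVars p) = monomial d (coeff d p) := by
  classical
  induction p using MvPolynomial.induction_on' with
  | monomial m c =>
    rw [universalScaleVars_monomial, coeff_monomial, coeff_monomial]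
    split_ifs with hmd
    · rw [hmd]
    · rw [monomial_zero]
  | add p q hp hq => simp [hp, hq]

variable [IsDomain R]

theorem universalScaleVars_mul_eq {G : Type*} {u : G → R} (hu : (Set.range u).Infinite)
    {a b : MvPolynomial ι R} (i : ι)
    (h : ∀ t : ι → G,
      scaleVars (fun j => u (t j)) a * b = C (u (t i)) * a * scaleVars (fun j => u (t j)) b) :
    C b * universalScaleVars a = C a * universalScaleVars b * X i := by
  have hCu : (Set.range (C ∘ u : G → MvPolynomial ι R)).Infinite := by
    rw [Set.range_comp]
    exact hu.image (C_injective _ _).injOn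
  refine funext_set _ (fun _ => hCu) fun x hx => ?_
  choose t ht using fun j => hx j trivial
  obtain rfl : x = fun j => C (u (t j)) := _root_.funext fun j => (ht j).symm
  simp only [map_mul, eval_C, eval_X, eval_universalScaleVars]
  linear_combination h t

theorem C_coeff_mul_eq_of_scaleVars_mul_eq {G : Type*} {u : G → R} (hu : (Set.range u).Infinite)
    {a b : MvPolynomial ι R} (i : ι)
    (h : ∀ t : ι → G,
      scaleVars (fun j => u (t j)) a * b = C (u (t i)) * a * scaleVars (fun j => u (t j)) b)
    (e : ι →₀ ℕ) :
    C (coeff e b) * a = C (coeff (e + Finsupp.single i 1) a) * X i * b := by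
  have hcoeff := congrArg (coeff (e + Finsupp.single i 1)) (universalScaleVars_mul_eq hu i h)
  rw [coeff_C_mul, coeff_mul_X, coeff_C_mul, coeff_universalScaleVars,
    coeff_universalScaleVars, monomial_add_single, pow_one] at hcoeff
  have hmon : (monomial e 1 : MvPolynomial ι R) ≠ 0 := by simp
  have hC (c : R) : monomial e c = C c * monomial e 1 := by rw [C_mul_monomial, mul_one]
  apply mul_left_cancel₀ hmon
  calc monomial e 1 * (C (coeff e b) * a) = a * monomial e (coeff e b) := by
        rw [hC (coeff e b)]; ring
    _ = b * (monomial e (coeff (e + Finsupp.single i 1) a) * X i) := hcoeff.symm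
    _ = monomial e 1 * (C (coeff (e + Finsupp.single i 1) a) * X i * b) := by
        rw [hC (coeff _ a)]; ring

end MvPolynomial

theorem infinite_range_algebraMap_units {K R : Type*} [Field K] [Infinite K] [CommRing R]
    [Nontrivial R] [Algebra K R] : (Set.range fun u : Kˣ => algebraMap K R u).Infinite := by
  refine ((Set.finite_singleton 0).infinite_compl.image
    (algebraMap K R).injective.injOn).mono ?_
  rintro _ ⟨x, hx, rfl⟩
  exact ⟨Units.mk0 x hx, rfl⟩

theorem IsFractionRing.map_mul_eq_of_ringEquivOfRingEquiv_eq {A : Type*} [CommRing A] [IsDomain A]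
    (φ : A ≃+* A) {F : FractionRing A} {a b c : A}
    (hab : F * algebraMap A _ b = algebraMap A _ a)
    (hF : IsFractionRing.ringEquivOfRingEquiv (K := FractionRing A) (L := FractionRing A) φ F =
      algebraMap A _ c * F) :
    φ a * b = c * a * φ b := by
  apply IsFractionRing.injective A (FractionRing A)
  have hφ := congrArg
    (IsFractionRing.ringEquivOfRingEquiv (K := FractionRing A) (L := FractionRing A) φ) hab
  rw [map_mul, hF, IsFractionRing.ringEquivOfRingEquiv_algebraMap,
    IsFractionRing.ringEquivOfRingEquiv_algebraMap] at hφ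
  simp only [map_mul, ← hφ, ← hab]
  ring

namespace MvPolynomial

variable {K ι κ : Type*} [CommRing K]

theorem sumAlgEquiv_symm_C (q : MvPolynomial κ K) :
    (sumAlgEquiv K ι κ).symm (C q) = rename Sum.inr q := by
  rw [AlgEquiv.symm_apply_eq]
  exact (AlgHom.congr_fun (sumAlgEquiv_comp_rename_inr K ι κ) q).symm

noncomputable def scaleInlEquiv (t : ι → Kˣ) :
    MvPolynomial (ι ⊕ κ) K ≃ₐ[K] MvPolynomial (ι ⊕ κ) K :=
  (sumAlgEquiv K ι κ).trans <|
    ((scaleVarsEquiv fun j => Units.map (algebraMap K (MvPolynomial κ K)) (t j)).restrictScalars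
      K).trans (sumAlgEquiv K ι κ).symm

theorem sumAlgEquiv_scaleInlEquiv (t : ι → Kˣ) (p : MvPolynomial (ι ⊕ κ) K) :
    sumAlgEquiv K ι κ (scaleInlEquiv t p) =
      scaleVars (fun j => C (t j : K)) (sumAlgEquiv K ι κ p) := by
  simp [scaleInlEquiv, algebraMap_eq]

theorem scaleInlEquiv_C (t : ι → Kˣ) (c : K) : scaleInlEquiv (κ := κ) t (C c) = C c := by
  simpa [algebraMap_eq] using (scaleInlEquiv (κ := κ) t).commutes c

theorem scaleInlEquiv_X_inl (t : ι → Kˣ) (j : ι) :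
    scaleInlEquiv (κ := κ) t (X (Sum.inl j)) = C (t j : K) * X (Sum.inl j) := by
  simp [scaleInlEquiv, sumAlgEquiv_X_inl, algebraMap_eq, sumAlgEquiv_symm_X, sumAlgEquiv_symm_C_C]

theorem scaleInlEquiv_X_inr (t : ι → Kˣ) (k : κ) :
    scaleInlEquiv t (X (Sum.inr k) : MvPolynomial (ι ⊕ κ) K) = X (Sum.inr k) := by
  simp [scaleInlEquiv, sumAlgEquiv_X_inr, sumAlgEquiv_symm_C_X]

end MvPolynomial

/-- If a rational function `F ∈ K(x₁,…,x_l,z₁,…,z_r)` over an infinite field `K` satisfies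
`F(t₁x₁,…,t_lx_l,z) = t_i · F(x,z)` for all `t ∈ (Kˣ)^l` (a fixed index `i`), then
`F = h(z) · x_i` for some rational function `h ∈ K(z₁,…,z_r)`. -/
theorem stmt12 {K : Type*} [Field K] [Infinite K] (l r : ℕ) (i : Fin l)
    (F : FractionRing (MvPolynomial (Fin l ⊕ Fin r) K))
    (h : ∀ t : Fin l → Kˣ,
      ∀ σ : FractionRing (MvPolynomial (Fin l ⊕ Fin r) K) ≃+*
            FractionRing (MvPolynomial (Fin l ⊕ Fin r) K),
        (∀ c : K, σ (algebraMap (MvPolynomial (Fin l ⊕ Fin r) K) _ (MvPolynomial.C c)) =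
            algebraMap (MvPolynomial (Fin l ⊕ Fin r) K) _ (MvPolynomial.C c)) →
        (∀ j : Fin l, σ (algebraMap (MvPolynomial (Fin l ⊕ Fin r) K) _
              (MvPolynomial.X (Sum.inl j))) =
            algebraMap (MvPolynomial (Fin l ⊕ Fin r) K) _
              (MvPolynomial.C (t j : K) * MvPolynomial.X (Sum.inl j))) →
        (∀ j : Fin r, σ (algebraMap (MvPolynomial (Fin l ⊕ Fin r) K) _
              (MvPolynomial.X (Sum.inr j))) =
            algebraMap (MvPolynomial (Fin l ⊕ Fin r) K) _ (MvPolynomial.X (Sum.inr j))) →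
        σ F = algebraMap (MvPolynomial (Fin l ⊕ Fin r) K) _ (MvPolynomial.C (t i : K)) * F) :
    ∃ p q : MvPolynomial (Fin r) K, q ≠ 0 ∧
      algebraMap (MvPolynomial (Fin l ⊕ Fin r) K) _ (MvPolynomial.rename Sum.inr q) * F =
      algebraMap (MvPolynomial (Fin l ⊕ Fin r) K) _
        (MvPolynomial.rename Sum.inr p * MvPolynomial.X (Sum.inl i)) := by
  obtain ⟨⟨a, b⟩, hab⟩ :=
    IsLocalization.surj (nonZeroDivisors (MvPolynomial (Fin l ⊕ Fin r) K)) F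
  have hscale (t : Fin l → Kˣ) :
      scaleVars (fun j => C (t j : K)) (sumAlgEquiv K (Fin l) (Fin r) a) * sumAlgEquiv K _ _ b =
        C (C (t i : K)) * sumAlgEquiv K _ _ a *
          scaleVars (fun j => C (t j : K)) (sumAlgEquiv K _ _ b) := by
    have hσ := h t (IsFractionRing.ringEquivOfRingEquiv (scaleInlEquiv t).toRingEquiv)
      (fun c => by rw [IsFractionRing.ringEquivOfRingEquiv_algebraMap]; simp [scaleInlEquiv_C])
      (fun j => by rw [IsFractionRing.ringEquivOfRingEquiv_algebraMap]; simp [scaleInlEquiv_X_inl])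
      (fun j => by rw [IsFractionRing.ringEquivOfRingEquiv_algebraMap]; simp [scaleInlEquiv_X_inr])
    simpa only [map_mul, AlgEquiv.coe_ringEquiv, sumAlgEquiv_scaleInlEquiv, sumAlgEquiv_C_inl] using
      congrArg (sumAlgEquiv K _ _) (IsFractionRing.map_mul_eq_of_ringEquivOfRingEquiv_eq _ hab hσ)
  have hb : sumAlgEquiv K (Fin l) (Fin r) b ≠ 0 := by simp [nonZeroDivisors.ne_zero b.2]
  obtain ⟨e, he⟩ := ne_zero_iff.mp hb
  refine ⟨coeff (e + Finsupp.single i 1) (sumAlgEquiv K _ _ a), coeff e (sumAlgEquiv K _ _ b),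
    he, ?_⟩
  have hcoeff := congrArg (sumAlgEquiv K (Fin l) (Fin r)).symm <| C_coeff_mul_eq_of_scaleVars_mul_eq
    (u := fun u : Kˣ => C (u : K)) infinite_range_algebraMap_units i hscale e
  simp only [map_mul, sumAlgEquiv_symm_C, sumAlgEquiv_symm_X, AlgEquiv.symm_apply_apply] at hcoeff
  apply mul_right_cancel₀ (IsFractionRing.to_map_ne_zero_of_mem_nonZeroDivisors
    (K := FractionRing (MvPolynomial (Fin l ⊕ Fin r) K)) b.2)
  rw [mul_assoc, hab, ← map_mul, ← map_mul, hcoeff]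
end

section
/- Let K be an algebraically closed field of characteristic 0 and let G be the semidirect product K^× ⋉ (⊕_{k≥1} K), where t ∈ K^× acts on the k-th summand by multiplication by t^k. Then for every n, there is no injective group homomorphism from G into GL_n(K); that is, G is not a linear group. -/
/-!
Let `T` be the image of `(2, 0)` and `u` that of the unit vector `e_k`, so that
`T u T⁻¹ = u ^ (2 ^ k)`. The spectrum of `u` is finite and stable under `λ ↦ λ ^ (2 ^ k)`, hence
consists of roots of unity, so `b = u ^ N - 1` is nilpotent for some `N > 0`, and nonzero because
`u` has infinite order. If `r ≥ 1` is the largest exponent with `b ^ r ≠ 0`, then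
`T b ^ r T⁻¹ = ((1 + b) ^ (2 ^ k) - 1) ^ r = 2 ^ (k r) b ^ r`, so `2 ^ (k r)` is an eigenvalue of
conjugation by `T` on matrices. As `k r ≥ k` and `k` is arbitrary, this endomorphism of a
finite-dimensional space would have infinitely many eigenvalues.
-/

open Polynomial in
theorem one_add_pow_sub_one_pow {R : Type*} [Ring R] {b : R} {r : ℕ} (hb : b ^ (r + 1) = 0)
    (M : ℕ) : ((1 + b) ^ M - 1) ^ r = (M : R) ^ r * b ^ r := by
  obtain ⟨a, ha⟩ : (X : ℤ[X]) ∣ (1 + X) ^ M - 1 := by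
    simp [X_dvd_iff, coeff_one_add_X_pow]
  have ha_sub : (X : ℤ[X]) ∣ a - C (M : ℤ) := by
    have := congrArg (coeff · 1) ha
    simp only [coeff_sub, coeff_one_add_X_pow, coeff_one, coeff_X_mul] at this
    simp [X_dvd_iff, ← this]
  obtain ⟨g, hg⟩ : X ^ (r + 1) ∣ ((1 + X : ℤ[X]) ^ M - 1) ^ r - (C (M : ℤ) * X) ^ r := by
    have : ((1 + X : ℤ[X]) ^ M - 1) ^ r - (C (M : ℤ) * X) ^ r
        = X ^ r * (a ^ r - C (M : ℤ) ^ r) := by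
      rw [ha]; ring
    rw [this, pow_succ]
    exact mul_dvd_mul_left _ (ha_sub.trans (sub_dvd_pow_sub_pow _ _ _))
  simpa [sub_eq_iff_eq_add, hb, mul_pow] using congrArg (aeval b) hg

theorem IsNilpotent.exists_units_conj_pow_eq_natCast_pow_mul {A : Type*} [Ring A] {T : Aˣ}
    {b : A} (hb : IsNilpotent b) (hb0 : b ≠ 0) {m : ℕ}
    (hconj : T * (1 + b) * ↑T⁻¹ = (1 + b) ^ m) :
    ∃ r, 0 < r ∧ b ^ r ≠ 0 ∧ T * b ^ r * ↑T⁻¹ = (m : A) ^ r * b ^ r := by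
  have := nontrivial_of_ne b 0 hb0
  set r := nilpotencyClass b - 1
  have hr : r + 1 = nilpotencyClass b := Nat.sub_add_cancel (pos_nilpotencyClass_iff.2 hb)
  have hconj_b : T * b * ↑T⁻¹ = (1 + b) ^ m - 1 := by
    rw [← hconj, mul_add, add_mul, mul_one, Units.mul_inv, add_sub_cancel_left]
  refine ⟨r, Nat.pos_of_ne_zero fun h ↦ hb0 ?_, pow_pred_nilpotencyClass hb, ?_⟩
  · rw [← nilpotencyClass_eq_one, ← hr, h]
  · rw [← Units.conj_pow, hconj_b, one_add_pow_sub_one_pow (hr ▸ pow_nilpotencyClass hb)]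

theorem pow_sub_eq_one_of_pow_eq_pow {M : Type*} [MonoidWithZero M] [IsLeftCancelMulZero M]
    {x : M} (hx : x ≠ 0) {a b : ℕ} (hab : a ≤ b) (h : x ^ a = x ^ b) : x ^ (b - a) = 1 := by
  refine mul_left_cancel₀ (pow_ne_zero a hx) ?_
  rw [pow_mul_pow_sub x hab, mul_one, h]

theorem Set.Finite.exists_pos_forall_pow_eq_one_of_mapsTo_pow {M : Type*} [MonoidWithZero M]
    [IsLeftCancelMulZero M] {S : Set M} (hS : S.Finite) (h0 : (0 : M) ∉ S) {m : ℕ}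
    (hm : 2 ≤ m) (hmaps : Set.MapsTo (· ^ m) S S) : ∃ N, 0 < N ∧ ∀ x ∈ S, x ^ N = 1 := by
  have hiter (j : ℕ) : Set.MapsTo (· ^ m ^ j) S S := by
    simpa [← pow_iterate] using hmaps.iterate j
  have := hS.to_subtype
  -- pigeonhole on the finitely many self-maps `x ↦ x ^ m ^ j` of `S`
  obtain ⟨i, j, hij, heq⟩ := Set.finite_univ.exists_lt_map_eq_of_forall_mem
    (f := fun j (x : S) ↦ (⟨x ^ m ^ j, hiter j x.2⟩ : S)) (fun _ ↦ Set.mem_univ _)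
  refine ⟨m ^ j - m ^ i, Nat.sub_pos_of_lt (Nat.pow_lt_pow_right hm hij), fun x hx ↦ ?_⟩
  exact pow_sub_eq_one_of_pow_eq_pow (ne_of_mem_of_not_mem hx h0)
    (Nat.pow_le_pow_right (by omega) hij.le) (congrArg Subtype.val (congrFun heq ⟨x, hx⟩))

theorem spectrum.mapsTo_pow_of_units_conj {K A : Type*} [Field K] [Ring A] [Algebra K A]
    {u T : Aˣ} {m : ℕ} (hconj : T * u * T⁻¹ = u ^ m) :
    Set.MapsTo (· ^ m) (spectrum K (u : A)) (spectrum K (u : A)) := by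
  intro μ hμ
  have := spectrum.pow_mem_pow (u : A) m hμ
  rwa [← Units.val_pow_eq_pow_val, ← hconj, Units.val_mul, Units.val_mul,
    spectrum.units_conjugate] at this

theorem Module.End.bddAbove_setOf_hasEigenvalue_two_pow {K V : Type*} [Field K] [CharZero K]
    [AddCommGroup V] [Module K V] [FiniteDimensional K V] (φ : Module.End K V) :
    BddAbove {j : ℕ | φ.HasEigenvalue ((2 : K) ^ j)} := by
  refine (φ.finite_hasEigenvalue.preimage fun i _ j _ h ↦ ?_).bddAbove
  exact Nat.pow_right_injective le_rfl (by exact_mod_cast h)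

namespace Matrix

variable {K ι : Type*} [Field K] [IsAlgClosed K] [Fintype ι] [DecidableEq ι]

theorem isNilpotent_of_spectrum_subset_zero {A : Matrix ι ι K} (h : spectrum K A ⊆ {0}) :
    IsNilpotent A := by
  have hroots : A.charpoly.roots = Multiset.replicate (Fintype.card ι) 0 := by
    refine Multiset.eq_replicate.2 ⟨?_, fun μ hμ ↦ h ?_⟩
    · rw [IsAlgClosed.card_roots_eq_natDegree, charpoly_natDegree_eq_dim]
    · exact mem_spectrum_iff_isRoot_charpoly.2 (Polynomial.isRoot_of_mem_roots hμ)
  have hX : A.charpoly = Polynomial.X ^ Fintype.card ι := by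
    rw [(IsAlgClosed.splits _).eq_prod_roots_of_monic A.charpoly_monic, hroots]
    simp
  exact ⟨Fintype.card ι, by simpa [hX] using A.aeval_self_charpoly⟩

theorem exists_pos_isNilpotent_pow_sub_one_of_units_conj {u T : GL ι K} {m : ℕ} (hm : 2 ≤ m)
    (hconj : T * u * T⁻¹ = u ^ m) : ∃ N, 0 < N ∧ IsNilpotent ((u : Matrix ι ι K) ^ N - 1) := by
  obtain ⟨N, hN, hroot⟩ :=
    (finite_spectrum (u : Matrix ι ι K)).exists_pos_forall_pow_eq_one_of_mapsTo_pow
      ((spectrum.zero_notMem_iff K).2 u.isUnit) hm (spectrum.mapsTo_pow_of_units_conj hconj)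
  refine ⟨N, hN, isNilpotent_of_spectrum_subset_zero ?_⟩
  rw [← map_one (algebraMap K (Matrix ι ι K)), ← spectrum.sub_singleton_eq,
    spectrum.map_pow_of_pos _ hN]
  rintro _ ⟨_, ⟨μ, hμ, rfl⟩, _, rfl, rfl⟩
  simp [hroot μ hμ]

theorem exists_hasEigenvalue_mulLeftRight_of_units_conj {u T : GL ι K} {m : ℕ} (hm : 2 ≤ m)
    (hconj : T * u * T⁻¹ = u ^ m) (hu : ∀ N, 0 < N → u ^ N ≠ 1) :
    ∃ r, 0 < r ∧ Module.End.HasEigenvalue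
      (LinearMap.mulLeftRight K ((T : Matrix ι ι K), ((T⁻¹ : GL ι K) : Matrix ι ι K)))
      ((m : K) ^ r) := by
  obtain ⟨N, hN, hnil⟩ := exists_pos_isNilpotent_pow_sub_one_of_units_conj hm hconj
  have hconjN : T * u ^ N * T⁻¹ = (u ^ N) ^ m := by
    rw [← conj_pow, hconj, ← pow_mul, mul_comm, pow_mul]
  rw [← Units.val_pow_eq_pow_val] at hnil
  have hb0 : ((u ^ N : GL ι K) : Matrix ι ι K) - 1 ≠ 0 := by
    rw [sub_ne_zero, Ne, Units.val_eq_one]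
    exact hu N hN
  obtain ⟨r, hr, hne, heig⟩ := hnil.exists_units_conj_pow_eq_natCast_pow_mul hb0 (by
    rw [add_sub_cancel, ← Units.val_mul, ← Units.val_mul, hconjN, Units.val_pow_eq_pow_val])
  refine ⟨r, hr, Module.End.hasEigenvalue_of_hasEigenvector ⟨?_, hne⟩⟩
  rw [Module.End.mem_eigenspace_iff, LinearMap.mulLeftRight_apply, heig, ← Nat.cast_pow, ← Nat.cast_pow, Nat.cast_smul_eq_nsmul, nsmul_eq_mul]

end Matrix

def PreservesSemidirectMul {K G : Type*} [Field K] [Mul G] (f : Kˣ × (ℕ+ →₀ K) → G) : Prop :=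
  ∀ (t s : Kˣ) (a b c : ℕ+ →₀ K), (∀ k : ℕ+, c k = (t : K) ^ (k : ℕ) * b k) →
    f (t * s, a + c) = f (t, a) * f (s, b)

namespace PreservesSemidirectMul

variable {K G : Type*} [Field K] [Group G] {f : Kˣ × (ℕ+ →₀ K) → G}

theorem map_one_add (hf : PreservesSemidirectMul f) (a b : ℕ+ →₀ K) :
    f (1, a + b) = f (1, a) * f (1, b) := by
  simpa using hf 1 1 a b b (by simp)

theorem map_one_zero (hf : PreservesSemidirectMul f) : f (1, 0) = 1 := by
  simpa using hf.map_one_add 0 0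

theorem map_one_nsmul (hf : PreservesSemidirectMul f) (M : ℕ) (a : ℕ+ →₀ K) :
    f (1, M • a) = f (1, a) ^ M := by
  induction M with
  | zero => simpa using hf.map_one_zero
  | succ M ih => rw [succ_nsmul, hf.map_one_add, ih, pow_succ]

theorem conj_map_one (hf : PreservesSemidirectMul f) {t : Kˣ} {b c : ℕ+ →₀ K}
    (hc : ∀ k : ℕ+, c k = (t : K) ^ (k : ℕ) * b k) :
    f (t, 0) * f (1, b) * (f (t, 0))⁻¹ = f (1, c) := by
  have h₁ := hf t 1 0 b c hc
  have h₂ := hf 1 t c 0 0 (by simp)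
  simp only [mul_one, one_mul, zero_add, add_zero] at h₁ h₂
  rw [← h₁, h₂, mul_inv_cancel_right]

end PreservesSemidirectMul

/-- The group `Kˣ ⋉ (⊕_{k≥1} K)`, where `t ∈ Kˣ` acts on the `k`-th summand by
multiplication by `t^k` (group law `(t,a)·(s,b) = (ts, a + t•b)` with `(t•b)_k = t^k b_k`),
is not linear: for every `n` there is no injective multiplication-preserving map into
`GL_n(K)`, where `K` is an algebraically closed field of characteristic zero. -/
theorem stmt19 {K : Type*} [Field K] [IsAlgClosed K] [CharZero K] (n : ℕ) :
    ¬ ∃ f : Kˣ × (ℕ+ →₀ K) → GL (Fin n) K,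
        Function.Injective f ∧
        ∀ (t s : Kˣ) (a b c : ℕ+ →₀ K),
          (∀ k : ℕ+, c k = (t : K) ^ (k : ℕ) * b k) →
          f (t * s, a + c) = f (t, a) * f (s, b) := by
  rintro ⟨f, hinj, hf⟩
  replace hf : PreservesSemidirectMul f := hf
  set T := f (Units.mk0 2 two_ne_zero, 0)
  obtain ⟨B, hB⟩ := Module.End.bddAbove_setOf_hasEigenvalue_two_pow
    (LinearMap.mulLeftRight K ((T : Matrix (Fin n) (Fin n) K), ((T⁻¹ : GL _ K) : Matrix _ _ K)))
  set k : ℕ+ := ⟨B + 1, B.succ_pos⟩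
  set u := f (1, Finsupp.single k 1)
  have hpow (M : ℕ) : u ^ M = f (1, Finsupp.single k (M : K)) := by
    rw [← hf.map_one_nsmul, Finsupp.smul_single, nsmul_one]
  have hconj : T * u * T⁻¹ = u ^ (2 ^ (k : ℕ)) := by
    rw [hf.conj_map_one (c := Finsupp.single k (2 ^ (k : ℕ))), hpow]
    · push_cast; rfl
    · intro j
      by_cases hj : k = j <;> simp [hj]
  have hu (N : ℕ) (hN : 0 < N) : u ^ N ≠ 1 := by
    rw [hpow, ← hf.map_one_zero, hinj.ne_iff, Ne, Prod.mk.injEq]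
    simp [hN.ne']
  obtain ⟨r, hr, heig⟩ := Matrix.exists_hasEigenvalue_mulLeftRight_of_units_conj
    (Nat.le_self_pow k.ne_zero 2) hconj hu
  have hkr : (k : ℕ) * r ≤ B := hB (by simpa [← pow_mul] using heig)
  have hk : (k : ℕ) = B + 1 := rfl
  have := Nat.le_mul_of_pos_right (k : ℕ) hr
  omega
end
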